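/- Fix integers n ≥ 1, d ≥ 1, a stepsize α > 0 and a probability p ∈ (0,1]. For i = 1,…,n let f_i : ℝ^d → ℝ be differentiable, and let r : ℝ^d → ℝ be convex and continuous. Let S be an n×n real symmetric positive semidefinite matrix with I − S² positive semidefinite. Suppose n×d real matrices (x★, z★, u★) satisfy, writing a_i for the i-th row: (z★)_i = (x★)_i − α·∇f_i((x★)_i) − α·(S·u★)_i for every i; S·z★ = 0; and (x★)_i = prox_{αr}((z★)_i) for every i; set v★ the matrix with rows (x★)_i − α·∇f_i((x★)_i). Let x, u be n×d real matrices with ‖S·(u − u★)‖_F² ≥ (1/5)·‖u − u★‖_F², set v the matrix with rows v_i = x_i − α·∇f_i(x_i) and z = v − α·S·u, and for θ ∈ {0,1} set u⁺(θ) = u + θ·(p/α)·S·z and x⁺(θ) the matrix with rows prox_{αr}( ((I − θ·S²)·z)_i ). Then p·[ ‖x⁺(1) − x★‖_F² + (α²/p²)·‖u⁺(1) − u★‖_F² ] + (1−p)·[ ‖x⁺(0) − x★‖_F² + (α²/p²)·‖u⁺(0) − u★‖_F² ] ≤ ‖v − v★‖_F² + ( α²/p² − α²/5 )·‖u − u★‖_F².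 -/

import Mathlib

noncomputable section

/-- An `n × d` real matrix, viewed as `n` rows in Euclidean space `ℝ^d`. -/
abbrev Mat (n d : ℕ) := Fin n → EuclideanSpace ℝ (Fin d)

/-- Multiplication of an `n × n` matrix with an `n × d` matrix. -/
def matMul {n d : ℕ} (S : Matrix (Fin n) (Fin n) ℝ) (x : Mat n d) : Mat n d :=
  fun i => ∑ j, S i j • x j

/-- Squared Frobenius norm of an `n × d` matrix. -/
def fro2 {n d : ℕ} (x : Mat n d) : ℝ := ∑ i, ‖x i‖ ^ 2

namespace MGaux

variable {n d : ℕ}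

def inn (x y : Mat n d) : ℝ := ∑ i, (inner ℝ (x i) (y i) : ℝ)

lemma fro2_eq (x : Mat n d) : fro2 x = inn x x := by
  simp only [fro2, inn, real_inner_self_eq_norm_sq]

lemma inn_comm (x y : Mat n d) : inn x y = inn y x := by
  simp only [inn]
  exact Finset.sum_congr rfl fun i _ => real_inner_comm _ _

lemma inn_add_left (x y z : Mat n d) : inn (x + y) z = inn x z + inn y z := by
  simp only [inn, Pi.add_apply, inner_add_left, Finset.sum_add_distrib]

lemma inn_sub_left (x y z : Mat n d) : inn (x - y) z = inn x z - inn y z := by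
  simp only [inn, Pi.sub_apply, inner_sub_left, Finset.sum_sub_distrib]

lemma inn_smul_left (c : ℝ) (x z : Mat n d) : inn (c • x) z = c * inn x z := by
  simp only [inn, Pi.smul_apply, real_inner_smul_left, Finset.mul_sum]

lemma inn_add_right (x y z : Mat n d) : inn x (y + z) = inn x y + inn x z := by
  rw [inn_comm, inn_add_left, inn_comm y x, inn_comm z x]

lemma inn_sub_right (x y z : Mat n d) : inn x (y - z) = inn x y - inn x z := by
  rw [inn_comm, inn_sub_left, inn_comm y x, inn_comm z x]

lemma inn_smul_right (c : ℝ) (x z : Mat n d) : inn x (c • z) = c * inn x z := by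
  rw [inn_comm, inn_smul_left, inn_comm]

lemma fro2_add (x y : Mat n d) : fro2 (x + y) = fro2 x + 2 * inn x y + fro2 y := by
  rw [fro2_eq, fro2_eq, fro2_eq, inn_add_left, inn_add_right, inn_add_right,
    inn_comm y x]; ring

lemma fro2_sub (x y : Mat n d) : fro2 (x - y) = fro2 x - 2 * inn x y + fro2 y := by
  rw [fro2_eq, fro2_eq, fro2_eq, inn_sub_left, inn_sub_right, inn_sub_right,
    inn_comm y x]; ring

lemma fro2_smul (c : ℝ) (x : Mat n d) : fro2 (c • x) = c ^ 2 * fro2 x := by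
  rw [fro2_eq, fro2_eq, inn_smul_left, inn_smul_right]; ring

lemma matMul_sub (S : Matrix (Fin n) (Fin n) ℝ) (a b : Mat n d) :
    matMul S (a - b) = matMul S a - matMul S b := by
  funext i; simp [matMul, smul_sub, Finset.sum_sub_distrib]

lemma matMul_zero (S : Matrix (Fin n) (Fin n) ℝ) :
    matMul S (0 : Mat n d) = 0 := by
  funext i; simp [matMul]

lemma matMul_smul (S : Matrix (Fin n) (Fin n) ℝ) (c : ℝ) (a : Mat n d) :
    matMul S (c • a) = c • matMul S a := by
  funext i
  simp only [matMul, Pi.smul_apply, Finset.smul_sum]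
  exact Finset.sum_congr rfl fun j _ => smul_comm _ _ _

lemma matMul_assoc (A B : Matrix (Fin n) (Fin n) ℝ) (a : Mat n d) :
    matMul (A * B) a = matMul A (matMul B a) := by
  funext i
  simp only [matMul, Matrix.mul_apply, Finset.sum_smul, Finset.smul_sum, mul_smul]
  rw [Finset.sum_comm]

lemma matMul_matSub (A B : Matrix (Fin n) (Fin n) ℝ) (a : Mat n d) :
    matMul (A - B) a = matMul A a - matMul B a := by
  funext i; simp [matMul, sub_smul, Finset.sum_sub_distrib]

lemma matMul_one (a : Mat n d) : matMul (1 : Matrix (Fin n) (Fin n) ℝ) a = a := by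
  funext i
  simp [matMul, Matrix.one_apply, ite_smul]

lemma inn_matMul_symm {S : Matrix (Fin n) (Fin n) ℝ} (hS : S.IsSymm)
    (a b : Mat n d) : inn (matMul S a) b = inn a (matMul S b) := by
  simp only [inn, matMul, inner_sum, sum_inner, real_inner_smul_left,
    real_inner_smul_right]
  rw [Finset.sum_comm]
  refine Finset.sum_congr rfl fun i _ => Finset.sum_congr rfl fun j _ => ?_
  rw [hS.apply i j]

lemma inn_matMul_psd {M : Matrix (Fin n) (Fin n) ℝ} (hM : M.PosSemidef)
    (a : Mat n d) : 0 ≤ inn a (matMul M a) := by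
  have key : inn a (matMul M a)
      = ∑ k : Fin d, dotProduct (star (fun i => a i k))
          (M.mulVec (fun i => a i k)) := by
    simp only [inn, matMul, inner_sum, real_inner_smul_right, PiLp.inner_apply,
      RCLike.inner_apply, conj_trivial, dotProduct, Matrix.mulVec,
      star_trivial, Pi.star_apply, PiLp.smul_apply, smul_eq_mul]
    rw [Finset.sum_congr rfl fun i _ => Finset.sum_comm, Finset.sum_comm]
    refine Finset.sum_congr rfl fun k _ => Finset.sum_congr rfl fun i _ => ?_
    rw [Finset.mul_sum]
    exact Finset.sum_congr rfl fun j _ => by ring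
  rw [key]
  exact Finset.sum_nonneg fun k _ => hM.dotProduct_mulVec_nonneg _

lemma prox_step {E : Type*} [NormedAddCommGroup E] [InnerProductSpace ℝ E]
    (α : ℝ) (hα0 : 0 < α) (r : E → ℝ) (hrconv : ConvexOn ℝ Set.univ r)
    (prox : E → E)
    (hprox : ∀ y w, α * r (prox y) + 1 / 2 * ‖prox y - y‖ ^ 2
        ≤ α * r w + 1 / 2 * ‖w - y‖ ^ 2)
    (y1 y2 : E) :
    0 ≤ α * (r (prox y2) - r (prox y1))
        + (inner ℝ (prox y1 - y1) (prox y2 - prox y1) : ℝ) := by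
  set a := prox y1 with ha
  set b := prox y2 with hb
  set A : ℝ := α * (r b - r a) + (inner ℝ (a - y1) (b - a) : ℝ) with hA
  set B : ℝ := 1 / 2 * ‖b - a‖ ^ 2 with hB
  have hBnn : 0 ≤ B := by positivity
  have ht : ∀ t : ℝ, 0 < t → t ≤ 1 → 0 ≤ A + t * B := by
    intro t ht0 ht1
    have hmem := hprox y1 (a + t • (b - a))
    have hconv := hrconv.2 (Set.mem_univ a) (Set.mem_univ b)
      (by linarith : (0:ℝ) ≤ 1 - t) (le_of_lt ht0) (by ring)
    have hcomb : (1 - t) • a + t • b = a + t • (b - a) := by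
      rw [smul_sub, sub_smul, one_smul]; abel
    rw [hcomb] at hconv
    have hnorm : ‖a + t • (b - a) - y1‖ ^ 2
        = ‖a - y1‖ ^ 2 + 2 * (t * (inner ℝ (a - y1) (b - a) : ℝ))
          + t ^ 2 * ‖b - a‖ ^ 2 := by
      have h' : a + t • (b - a) - y1 = (a - y1) + t • (b - a) := by abel
      rw [h', norm_add_sq_real, real_inner_smul_right, norm_smul]
      simp [mul_pow, sq_abs]
    rw [hnorm] at hmem
    have h1 : α * r (a + t • (b - a)) ≤ α * ((1 - t) * r a + t * r b) :=
      mul_le_mul_of_nonneg_left hconv (le_of_lt hα0)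
    have hTA : 0 ≤ t * A + t ^ 2 * B := by
      rw [hA, hB]; nlinarith [hmem, h1]
    nlinarith [hTA, ht0]
  by_contra hcon
  push_neg at hcon
  set t := min 1 ((-A) / (B + 1)) with htdef
  have hB1 : (0:ℝ) < B + 1 := by linarith
  have ht0 : 0 < t := lt_min one_pos (div_pos (by linarith) hB1)
  have ht1 : t ≤ 1 := min_le_left _ _
  have h2 := ht t ht0 ht1
  have h3 : t * B ≤ ((-A) / (B + 1)) * B :=
    mul_le_mul_of_nonneg_right (min_le_right _ _) hBnn
  have h4 : ((-A) / (B + 1)) * B < -A := by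
    rw [div_mul_eq_mul_div, div_lt_iff₀ hB1]; nlinarith
  linarith

lemma prox_nonexpansive {E : Type*} [NormedAddCommGroup E] [InnerProductSpace ℝ E]
    (α : ℝ) (hα0 : 0 < α) (r : E → ℝ) (hrconv : ConvexOn ℝ Set.univ r)
    (prox : E → E)
    (hprox : ∀ y w, α * r (prox y) + 1 / 2 * ‖prox y - y‖ ^ 2
        ≤ α * r w + 1 / 2 * ‖w - y‖ ^ 2)
    (y y' : E) : ‖prox y - prox y'‖ ^ 2 ≤ ‖y - y'‖ ^ 2 := by
  have s1 := prox_step α hα0 r hrconv prox hprox y y'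
  have s2 := prox_step α hα0 r hrconv prox hprox y' y
  set a := prox y
  set b := prox y'
  have comb : (inner ℝ (a - y) (b - a) : ℝ) + (inner ℝ (b - y') (a - b) : ℝ)
      = (inner ℝ (y - y') (a - b) : ℝ) - ‖a - b‖ ^ 2 := by
    simp only [inner_sub_left, inner_sub_right, ← real_inner_self_eq_norm_sq]
    ring
  have key : ‖a - b‖ ^ 2 ≤ (inner ℝ (y - y') (a - b) : ℝ) := by linarith
  have cs := real_inner_le_norm (y - y') (a - b)
  nlinarith [norm_nonneg (a - b), norm_nonneg (y - y')]

end MGaux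

open MGaux

/-- **Lemma 2 (one-step nonexpansiveness of MG-Skip).** -/
theorem mgSkip_one_step_nonexpansive
    (n d : ℕ) (hn : 1 ≤ n) (hd : 1 ≤ d)
    (α p : ℝ) (hα0 : 0 < α) (hp0 : 0 < p) (hp1 : p ≤ 1)
    (f : Fin n → EuclideanSpace ℝ (Fin d) → ℝ)
    (g : Fin n → EuclideanSpace ℝ (Fin d) → EuclideanSpace ℝ (Fin d))
    (hgrad : ∀ i x, HasGradientAt (f i) (g i x) x)
    (r : EuclideanSpace ℝ (Fin d) → ℝ)
    (hrconv : ConvexOn ℝ Set.univ r) (hrcont : Continuous r)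
    (prox : EuclideanSpace ℝ (Fin d) → EuclideanSpace ℝ (Fin d))
    (hprox : ∀ y w, α * r (prox y) + 1 / 2 * ‖prox y - y‖ ^ 2
        ≤ α * r w + 1 / 2 * ‖w - y‖ ^ 2)
    (S : Matrix (Fin n) (Fin n) ℝ)
    (hSsymm : S.IsSymm) (hSpsd : S.PosSemidef)
    (hISS : (1 - S * S).PosSemidef)
    (xstar zstar ustar : Mat n d)
    (hzstar : ∀ i, zstar i = xstar i - α • g i (xstar i) - α • matMul S ustar i)
    (hSz : matMul S zstar = 0)
    (hxstar : ∀ i, xstar i = prox (zstar i))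
    (vstar : Mat n d)
    (hvstar : ∀ i, vstar i = xstar i - α • g i (xstar i))
    (x u : Mat n d)
    (hu5 : (1 / 5) * fro2 (u - ustar) ≤ fro2 (matMul S (u - ustar)))
    (v : Mat n d)
    (hv : ∀ i, v i = x i - α • g i (x i))
    (z : Mat n d)
    (hz : z = v - α • matMul S u)
    (uplus : Bool → Mat n d)
    (huplus : ∀ θ, uplus θ = u + (if θ then (1 : ℝ) else 0) • ((p / α) • matMul S z))
    (xplus : Bool → Mat n d)
    (hxplus : ∀ θ i, xplus θ i =
        prox ((z - (if θ then (1 : ℝ) else 0) • matMul (S * S) z) i)) :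
    p * (fro2 (xplus true - xstar) + α ^ 2 / p ^ 2 * fro2 (uplus true - ustar))
      + (1 - p) *
        (fro2 (xplus false - xstar) + α ^ 2 / p ^ 2 * fro2 (uplus false - ustar))
    ≤ fro2 (v - vstar) + (α ^ 2 / p ^ 2 - α ^ 2 / 5) * fro2 (u - ustar) := by
  have hnonexp := prox_nonexpansive α hα0 r hrconv prox hprox
  -- basic abbreviations
  set w : Mat n d := u - ustar with hw
  set e : Mat n d := v - vstar with he
  -- z⋆ in terms of v⋆
  have hzsv : ∀ i, zstar i = vstar i - α • matMul S ustar i := by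
    intro i; rw [hzstar i, hvstar i]
  have hzstar' : zstar = vstar - α • matMul S ustar := by
    funext i; rw [hzsv i]; rfl
  -- ζ := z - z⋆ = e - α • S w
  have hzeta : z - zstar = e - α • matMul S w := by
    rw [hz, hzstar', he, hw, matMul_sub]
    funext i
    simp only [Pi.sub_apply, Pi.smul_apply, smul_sub]
    abel
  set ζ : Mat n d := e - α • matMul S w with hζ
  -- S z = S ζ
  have hSzeq : matMul S z = matMul S ζ := by
    have h1 : matMul S (z - zstar) = matMul S z - matMul S zstar :=
      matMul_sub S z zstar
    rw [hSz, sub_zero, hzeta] at h1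
    exact h1.symm
  -- S² z⋆ = 0
  have hSSz : matMul (S * S) zstar = 0 := by
    rw [matMul_assoc, hSz, matMul_zero]
  -- named scalar quantities
  set E : ℝ := fro2 e with hE
  set W : ℝ := fro2 w with hWd
  set SW : ℝ := fro2 (matMul S w) with hSWd
  set Z : ℝ := fro2 ζ with hZd
  set SZ : ℝ := fro2 (matMul S ζ) with hSZd
  set ZZ : ℝ := fro2 (ζ - matMul (S * S) ζ) with hZZd
  set IP1 : ℝ := inn e (matMul S w) with hIP1d
  set IP2 : ℝ := inn w (matMul S ζ) with hIP2d
  -- prox bounds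
  have hX0 : fro2 (xplus false - xstar) ≤ Z := by
    rw [hZd, ← hzeta, fro2, fro2]
    refine Finset.sum_le_sum fun i _ => ?_
    have h1 : (xplus false - xstar) i = prox (z i) - prox (zstar i) := by
      rw [Pi.sub_apply, hxplus false i, hxstar i]
      simp
    rw [h1, Pi.sub_apply]
    exact hnonexp (z i) (zstar i)
  have hX1 : fro2 (xplus true - xstar) ≤ ZZ := by
    have hzz : ζ - matMul (S * S) ζ
        = (z - matMul (S * S) z) - (zstar - matMul (S * S) zstar) := by
      rw [← hzeta, matMul_sub]
      funext i
      simp only [Pi.sub_apply]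
      abel
    rw [hZZd, hzz, fro2, fro2]
    refine Finset.sum_le_sum fun i _ => ?_
    have h1 : (xplus true - xstar) i
        = prox ((z - matMul (S * S) z) i) - prox ((zstar - matMul (S * S) zstar) i) := by
      rw [Pi.sub_apply, hxplus true i, hxstar i, hSSz]
      simp
    rw [h1, Pi.sub_apply]
    exact hnonexp _ _
  -- uplus identities
  have hU0 : fro2 (uplus false - ustar) = W := by
    rw [huplus false, hWd, hw]
    simp only [Bool.false_eq_true, if_false, zero_smul, add_zero]
  have hU1 : uplus true - ustar = w + (p / α) • matMul S ζ := by
    rw [huplus true, hSzeq, hw]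
    simp only [if_true, one_smul]
    funext i
    simp only [Pi.sub_apply, Pi.add_apply, Pi.smul_apply]
    abel
  have hD1 : fro2 (uplus true - ustar) = W + 2 * ((p / α) * IP2) + (p / α) ^ 2 * SZ := by
    rw [hU1, fro2_add, inn_smul_right, fro2_smul, hWd, hIP2d, hSZd]
  -- scalar identities
  have hZeq : Z = E - 2 * (α * IP1) + α ^ 2 * SW := by
    rw [hZd, hζ, fro2_sub, inn_smul_right, fro2_smul, hE, hIP1d, hSWd]
  have hIP2 : IP2 = IP1 - α * SW := by
    rw [hIP2d, ← inn_matMul_symm hSsymm, hζ, inn_sub_right, inn_smul_right,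
      ← fro2_eq, inn_comm, hIP1d, hSWd]
  have hZZ : ZZ + SZ ≤ Z := by
    have h5 : ZZ = Z - 2 * inn ζ (matMul (S * S) ζ) + fro2 (matMul (S * S) ζ) := by
      rw [hZZd, fro2_sub, hZd]
    have h6 : inn ζ (matMul (S * S) ζ) = SZ := by
      rw [matMul_assoc, ← inn_matMul_symm hSsymm, ← fro2_eq, hSZd]
    have h8 : fro2 (matMul (S * S) ζ)
        = inn (matMul S ζ) (matMul (S * S) (matMul S ζ)) := by
      rw [matMul_assoc, fro2_eq, inn_matMul_symm hSsymm, ← matMul_assoc]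
    have h9 := inn_matMul_psd hISS (matMul S ζ)
    rw [matMul_matSub, matMul_one, inn_sub_right, ← fro2_eq, ← hSZd, ← h8] at h9
    linarith
  -- scaled inequalities
  have hZZ' : p * ZZ + p * SZ ≤ p * Z := by
    have h := mul_le_mul_of_nonneg_left hZZ hp0.le
    rw [mul_add] at h
    exact h
  have hu5' : α ^ 2 / 5 * W ≤ α ^ 2 * SW := by
    have h := mul_le_mul_of_nonneg_left hu5 (sq_nonneg α)
    have h2 : α ^ 2 / 5 * W = α ^ 2 * (1 / 5 * W) := by ring
    rw [h2]
    exact h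
  have hIP2' : 2 * (α * IP2) = 2 * (α * IP1) - 2 * (α ^ 2 * SW) := by
    rw [hIP2]; ring
  -- final chain
  have hexpand : p * (ZZ + α ^ 2 / p ^ 2 * (W + 2 * ((p / α) * IP2) + (p / α) ^ 2 * SZ))
        + (1 - p) * (Z + α ^ 2 / p ^ 2 * W)
      = p * ZZ + (Z - p * Z) + p * SZ + α ^ 2 / p ^ 2 * W + 2 * (α * IP2) := by
    have hα0' : α ≠ 0 := ne_of_gt hα0
    have hp0' : p ≠ 0 := ne_of_gt hp0
    field_simp
    ring
  calc p * (fro2 (xplus true - xstar) + α ^ 2 / p ^ 2 * fro2 (uplus true - ustar))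
        + (1 - p) * (fro2 (xplus false - xstar)
            + α ^ 2 / p ^ 2 * fro2 (uplus false - ustar))
      ≤ p * (ZZ + α ^ 2 / p ^ 2 * (W + 2 * ((p / α) * IP2) + (p / α) ^ 2 * SZ))
        + (1 - p) * (Z + α ^ 2 / p ^ 2 * W) := by
        rw [hD1, hU0]
        exact add_le_add
          (mul_le_mul_of_nonneg_left (add_le_add_left hX1 _) hp0.le)
          (mul_le_mul_of_nonneg_left (add_le_add_left hX0 _) (by linarith))
    _ = p * ZZ + (Z - p * Z) + p * SZ + α ^ 2 / p ^ 2 * W + 2 * (α * IP2) := hexpand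
    _ ≤ E + (α ^ 2 / p ^ 2 - α ^ 2 / 5) * W := by
        linarith [hZZ', hZeq, hIP2', hu5']
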